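/- Let x ∈ l(r,s,t,p;Δ) and (x^m) ⊆ l(r,s,t,p;Δ) with 1 < p_n ≤ M. If σ_p(x^m) → σ_p(x) and x^m_k → x_k as m → ∞ for each k, then ‖x^m − x‖ → 0 in the Luxemburg norm. -/

import Mathlib

open Finset Filter Topology ENNReal

/-- The difference operator `Δ` with the convention `x₋₁ = 0`. -/
def del (x : ℕ → ℝ) (k : ℕ) : ℝ :=
  x k - if k = 0 then 0 else x (k - 1)

/-- The generalized-means-of-differences transform `(A(r,s,t)·Δ)x`. -/
noncomputable def Amap (r s t : ℕ → ℝ) (x : ℕ → ℝ) (n : ℕ) : ℝ :=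
  (1 / r n) * ∑ k ∈ Finset.range (n + 1), s (n - k) * t k * del x k

/-- The modular `σ_p` on `l(r,s,t,p;Δ)`, with values in `[0,∞]`. -/
noncomputable def sigmaP (r s t p : ℕ → ℝ) (x : ℕ → ℝ) : ℝ≥0∞ :=
  ∑' n, ENNReal.ofReal (|Amap r s t x n| ^ p n)

/-- The space `l(r,s,t,p;Δ)`. -/
def lrstp (r s t p : ℕ → ℝ) : Set (ℕ → ℝ) :=
  {x | sigmaP r s t p x < ⊤}

/-- The paranorm `h̃` on `l(r,s,t,p;Δ)`. -/
noncomputable def htilde (r s t p : ℕ → ℝ) (M : ℝ) (x : ℕ → ℝ) : ℝ :=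
  ((sigmaP r s t p x).toReal) ^ (1 / M)

/-- The Luxemburg norm on `l(r,s,t,p;Δ)`. -/
noncomputable def lux (r s t p : ℕ → ℝ) (x : ℕ → ℝ) : ℝ :=
  sInf {c : ℝ | 0 < c ∧ sigmaP r s t p (c⁻¹ • x) ≤ 1}

/-!
With `c = 2 ^ (M - 1)`, convexity of `u ↦ u ^ p` gives
`|a - b| ^ p_n ≤ c (|a| ^ p_n + |b| ^ p_n)` with a constant uniform in `n`, because `p_n ≤ M`.
Fatou's lemma for the counting measure, applied to the nonnegative terms
`c (|A xᵐ|ₙ ^ p_n + |A x|ₙ ^ p_n) - |A (xᵐ - x)|ₙ ^ p_n` (which converge termwise, since each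
`(A y)ₙ` depends continuously on finitely many coordinates of `y`), together with
`σ_p(xᵐ) → σ_p(x)`, forces `σ_p(xᵐ - x) → 0`. Finally `σ_p(λ y) ≤ λ ^ M σ_p(y)` for `λ ≥ 1`, so
`σ_p(ε⁻¹ (xᵐ - x)) ≤ 1` for large `m`, i.e. `‖xᵐ - x‖ ≤ ε`.
-/

theorem ENNReal.tsum_liminf_le_liminf_tsum {ι β : Type*} {l : Filter ι} [l.IsCountablyGenerated]
    (f : ι → β → ℝ≥0∞) :
    ∑' b, liminf (fun i => f i b) l ≤ liminf (fun i => ∑' b, f i b) l := by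
  let _ : MeasurableSpace β := ⊤
  simpa only [MeasureTheory.lintegral_count' measurable_from_top] using
    MeasureTheory.lintegral_liminf_le' (μ := MeasureTheory.Measure.count) (u := l)
      fun i => (measurable_from_top (f := f i)).aemeasurable

theorem ENNReal.tendsto_nhds_zero_of_tendsto_add_of_le_liminf {ι : Type*} {l : Filter ι}
    [l.NeBot] {a b : ι → ℝ≥0∞} {s : ℝ≥0∞} (hs : s ≠ ⊤)
    (hab : Tendsto (fun i => a i + b i) l (𝓝 s)) (ha : s ≤ liminf a l) :
    Tendsto b l (𝓝 0) := by
  refine ENNReal.tendsto_nhds_zero.2 fun ε hε => ?_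
  have hε2 : ε / 2 ≠ 0 := (ENNReal.half_pos hε.ne').ne'
  have hupper : ∀ᶠ i in l, a i + b i ≤ s + ε / 2 :=
    (hab.eventually_lt_const (ENNReal.lt_add_right hs hε2)).mono fun _ => le_of_lt
  have hlower : ∀ᶠ i in l, s ≤ a i + ε / 2 := by
    refine (eventually_lt_of_lt_liminf ?_).mono fun _ => le_of_lt
    rw [liminf_add_const l a (ε / 2) (by isBoundedDefault) (by isBoundedDefault)]
    exact (ENNReal.lt_add_right hs hε2).trans_le (add_le_add_left ha _)
  filter_upwards [hupper, hlower] with i hu hl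
  refine (ENNReal.add_le_add_iff_left hs).1 ?_
  calc s + b i ≤ a i + ε / 2 + b i := by gcongr
    _ = a i + b i + ε / 2 := by ring
    _ ≤ s + ε / 2 + ε / 2 := by gcongr
    _ = s + ε := by rw [add_assoc, ENNReal.add_halves]

theorem ENNReal.tendsto_tsum_zero_of_le_of_tendsto {ι β : Type*} {l : Filter ι} [l.NeBot]
    [l.IsCountablyGenerated] {w G : ι → β → ℝ≥0∞} {g : β → ℝ≥0∞}
    (hwG : ∀ i b, w i b ≤ G i b) (hw : ∀ b, Tendsto (fun i => w i b) l (𝓝 0))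
    (hG : ∀ b, Tendsto (fun i => G i b) l (𝓝 (g b)))
    (hsum : Tendsto (fun i => ∑' b, G i b) l (𝓝 (∑' b, g b))) (hfin : ∑' b, g b ≠ ⊤) :
    Tendsto (fun i => ∑' b, w i b) l (𝓝 0) := by
  have hsplit : ∀ i, ∑' b, G i b = ∑' b, (G i b - w i b) + ∑' b, w i b := fun i => by
    rw [← ENNReal.tsum_add]
    exact tsum_congr fun b => (tsub_add_cancel_of_le (hwG i b)).symm
  have hdiff : ∀ b, Tendsto (fun i => G i b - w i b) l (𝓝 (g b)) := fun b => by
    simpa using ENNReal.Tendsto.sub (hG b) (hw b) (Or.inr ENNReal.zero_ne_top)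
  refine ENNReal.tendsto_nhds_zero_of_tendsto_add_of_le_liminf hfin
    (by simpa only [hsplit] using hsum) ?_
  calc ∑' b, g b = ∑' b, liminf (fun i => G i b - w i b) l :=
        tsum_congr fun b => (hdiff b).liminf_eq.symm
    _ ≤ _ := ENNReal.tsum_liminf_le_liminf_tsum _

lemma del_sub (y z : ℕ → ℝ) (k : ℕ) : del (y - z) k = del y k - del z k := by
  simp only [del, Pi.sub_apply]; split_ifs <;> ring

lemma del_smul (c : ℝ) (y : ℕ → ℝ) (k : ℕ) : del (c • y) k = c * del y k := by
  simp only [del, Pi.smul_apply, smul_eq_mul]; split_ifs <;> ring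

lemma continuous_del (k : ℕ) : Continuous fun x : ℕ → ℝ => del x k := by
  unfold del
  split_ifs <;> fun_prop

lemma continuous_Amap (r s t : ℕ → ℝ) (n : ℕ) : Continuous fun x => Amap r s t x n := by
  unfold Amap
  exact continuous_const.mul
    (continuous_finsetSum _ fun k _ => continuous_const.mul (continuous_del k))

lemma Amap_sub (r s t : ℕ → ℝ) (y z : ℕ → ℝ) (n : ℕ) :
    Amap r s t (y - z) n = Amap r s t y n - Amap r s t z n := by
  simp only [Amap, del_sub, mul_sub, Finset.sum_sub_distrib]

lemma Amap_smul (r s t : ℕ → ℝ) (c : ℝ) (y : ℕ → ℝ) (n : ℕ) :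
    Amap r s t (c • y) n = c * Amap r s t y n := by
  simp only [Amap, del_smul, Finset.mul_sum]
  exact Finset.sum_congr rfl fun k _ => by ring

lemma Real.abs_sub_rpow_le {p M : ℝ} (hp : 1 ≤ p) (hpM : p ≤ M) (u v : ℝ) :
    |u - v| ^ p ≤ 2 ^ (M - 1) * (|u| ^ p + |v| ^ p) := by
  have hconvex : (|u| + |v|) ^ p ≤ 2 ^ (p - 1) * (|u| ^ p + |v| ^ p) := by
    exact_mod_cast NNReal.rpow_add_le_mul_rpow_add_rpow ⟨|u|, abs_nonneg u⟩ ⟨|v|, abs_nonneg v⟩ hp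
  calc |u - v| ^ p ≤ (|u| + |v|) ^ p := by gcongr; exact abs_sub u v
    _ ≤ 2 ^ (p - 1) * (|u| ^ p + |v| ^ p) := hconvex
    _ ≤ 2 ^ (M - 1) * (|u| ^ p + |v| ^ p) := by
        gcongr
        linarith

section Modular

variable {r s t p : ℕ → ℝ} {M : ℝ}

theorem tendsto_sigmaP_sub_zero {ι : Type*} {l : Filter ι} [l.NeBot] [l.IsCountablyGenerated]
    (hp : ∀ n, 1 ≤ p n) (hpM : ∀ n, p n ≤ M) {x : ℕ → ℝ} (hx : sigmaP r s t p x ≠ ⊤)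
    {xs : ι → ℕ → ℝ} (hmod : Tendsto (fun i => sigmaP r s t p (xs i)) l (𝓝 (sigmaP r s t p x)))
    (hcoord : Tendsto xs l (𝓝 x)) :
    Tendsto (fun i => sigmaP r s t p (xs i - x)) l (𝓝 0) := by
  set c : ℝ≥0∞ := ENNReal.ofReal (2 ^ (M - 1))
  have hA : ∀ n, Tendsto (fun i => Amap r s t (xs i) n) l (𝓝 (Amap r s t x n)) := fun n =>
    ((continuous_Amap r s t n).tendsto x).comp hcoord
  have hpow : ∀ n {f : ι → ℝ} {a : ℝ}, Tendsto f l (𝓝 a) →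
      Tendsto (fun i => ENNReal.ofReal (|f i| ^ p n)) l (𝓝 (ENNReal.ofReal (|a| ^ p n))) :=
    fun n _ _ h => ENNReal.tendsto_ofReal (h.abs.rpow_const (Or.inr (by linarith [hp n])))
  refine ENNReal.tendsto_tsum_zero_of_le_of_tendsto
    (G := fun i n => c * (ENNReal.ofReal (|Amap r s t (xs i) n| ^ p n)
      + ENNReal.ofReal (|Amap r s t x n| ^ p n)))
    (g := fun n => c * (ENNReal.ofReal (|Amap r s t x n| ^ p n)
      + ENNReal.ofReal (|Amap r s t x n| ^ p n))) (fun i n => ?_) (fun n => ?_) (fun n => ?_) ?_ ?_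
  · rw [Amap_sub, ← ENNReal.ofReal_add (by positivity) (by positivity),
      ← ENNReal.ofReal_mul (by positivity)]
    exact ENNReal.ofReal_le_ofReal (Real.abs_sub_rpow_le (hp n) (hpM n) _ _)
  · simpa [Amap_sub, Real.zero_rpow (by linarith [hp n] : p n ≠ 0)] using
      hpow n ((hA n).sub_const (Amap r s t x n))
  · exact ENNReal.Tendsto.const_mul ((hpow n (hA n)).add tendsto_const_nhds)
      (Or.inr ENNReal.ofReal_ne_top)
  · simp only [ENNReal.tsum_mul_left, ENNReal.tsum_add]
    exact ENNReal.Tendsto.const_mul (hmod.add tendsto_const_nhds) (Or.inr ENNReal.ofReal_ne_top)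
  · simp only [ENNReal.tsum_mul_left, ENNReal.tsum_add]
    exact ENNReal.mul_ne_top ENNReal.ofReal_ne_top (ENNReal.add_ne_top.2 ⟨hx, hx⟩)

lemma sigmaP_smul_le (hpM : ∀ n, p n ≤ M) {c : ℝ} (hc : 1 ≤ c) (y : ℕ → ℝ) :
    sigmaP r s t p (c • y) ≤ ENNReal.ofReal (c ^ M) * sigmaP r s t p y := by
  rw [sigmaP, sigmaP, ← ENNReal.tsum_mul_left]
  refine ENNReal.tsum_le_tsum fun n => ?_
  rw [← ENNReal.ofReal_mul (by positivity), Amap_smul, abs_mul, abs_of_nonneg (by linarith),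
    Real.mul_rpow (by linarith) (abs_nonneg _)]
  gcongr
  exact hpM n

lemma lux_nonneg (y : ℕ → ℝ) : 0 ≤ lux r s t p y :=
  Real.sInf_nonneg fun _ hc => hc.1.le

lemma lux_le {c : ℝ} (hc : 0 < c) {y : ℕ → ℝ} (hy : sigmaP r s t p (c⁻¹ • y) ≤ 1) :
    lux r s t p y ≤ c :=
  csInf_le ⟨0, fun _ hc => hc.1.le⟩ ⟨hc, hy⟩

theorem tendsto_lux_zero {ι : Type*} {l : Filter ι} (hpM : ∀ n, p n ≤ M) {y : ι → ℕ → ℝ}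
    (hy : Tendsto (fun i => sigmaP r s t p (y i)) l (𝓝 0)) :
    Tendsto (fun i => lux r s t p (y i)) l (𝓝 0) := by
  refine tendsto_order.2 ⟨fun a ha => .of_forall fun i => ha.trans_le (lux_nonneg _),
    fun ε hε => ?_⟩
  set δ := min (ε / 2) 1
  have hδ : 0 < δ := by positivity
  have hscaled : Tendsto (fun i => ENNReal.ofReal (δ⁻¹ ^ M) * sigmaP r s t p (y i)) l (𝓝 0) := by
    simpa using ENNReal.Tendsto.const_mul hy (Or.inr ENNReal.ofReal_ne_top)
  filter_upwards [hscaled.eventually_lt_const zero_lt_one] with i hi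
  calc lux r s t p (y i) ≤ δ :=
        lux_le hδ ((sigmaP_smul_le hpM (one_le_inv₀ hδ |>.2 (min_le_right _ _)) _).trans hi.le)
    _ < ε := (min_le_left _ _).trans_lt (by linarith)

end Modular

theorem modular_coord_convergence_implies_norm_general
    (r s t p : ℕ → ℝ)
    (M : ℝ) (hp : ∀ n, 1 < p n) (hpM : ∀ n, p n ≤ M)
    (x : ℕ → ℝ) (hx : x ∈ lrstp r s t p)
    (xs : ℕ → ℕ → ℝ) (hxs : ∀ m, xs m ∈ lrstp r s t p)
    (hmod : Tendsto (fun m => (sigmaP r s t p (xs m)).toReal) atTop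
      (𝓝 ((sigmaP r s t p x).toReal)))
    (hcoord : ∀ k, Tendsto (fun m => xs m k) atTop (𝓝 (x k))) :
    Tendsto (fun m => lux r s t p (xs m - x)) atTop (𝓝 0) := by
  have hmod' : Tendsto (fun m => sigmaP r s t p (xs m)) atTop (𝓝 (sigmaP r s t p x)) :=
    (ENNReal.tendsto_toReal_iff (fun m => (hxs m).ne) hx.ne).1 hmod
  exact tendsto_lux_zero hpM
    (tendsto_sigmaP_sub_zero (fun n => (hp n).le) hpM hx.ne hmod' (tendsto_pi_nhds.2 hcoord))

theorem modular_coord_convergence_implies_norm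
    (r s t p : ℕ → ℝ) (hr : ∀ n, r n ≠ 0) (ht : ∀ n, t n ≠ 0) (hs0 : s 0 ≠ 0)
    (M : ℝ) (hp : ∀ n, 1 < p n) (hpM : ∀ n, p n ≤ M)
    (x : ℕ → ℝ) (hx : x ∈ lrstp r s t p)
    (xs : ℕ → ℕ → ℝ) (hxs : ∀ m, xs m ∈ lrstp r s t p)
    (hmod : Tendsto (fun m => (sigmaP r s t p (xs m)).toReal) atTop
      (𝓝 ((sigmaP r s t p x).toReal)))
    (hcoord : ∀ k, Tendsto (fun m => xs m k) atTop (𝓝 (x k))) :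
    Tendsto (fun m => lux r s t p (xs m - x)) atTop (𝓝 0) :=
  modular_coord_convergence_implies_norm_general r s t p M hp hpM x hx xs hxs hmod hcoord
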